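/- arXiv:1311.1940 — 7 statements merged into one kernel-verified Lean document; each statement's English description precedes it below -/
import Mathlib

section
/- Let F be a field, α_1,...,α_n distinct elements of F, G = ∏_{i=1}^n (x - α_i). Let f ∈ F[x] with deg f < k, and r_i = f(α_i) + e_i with error set E = {i : e_i ≠ 0} and error locator Λ = ∏_{j∈E}(x - α_j). Let R^(t) be the polynomial of degree < n interpolating r_i^t at α_i. Then Λ · R^(t) ≡ Λ · f^t (mod G) for every integer t ≥ 1. -/
open Polynomial
noncomputable section
open scoped Classical

/-! At a node `α i` outside the error set, `R^(t)` takes the value `r_i ^ t = f(α i) ^ t`;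
at a node inside it, the error locator `Λ` vanishes. So `Λ · (R^(t) - f ^ t)` vanishes at
every `α i`, and is therefore divisible by `G`, the product of the pairwise coprime factors
`X - α i`. -/

open Finset Lagrange

section

variable {F ι : Type*} [Field F] [Fintype ι] {α : ι → F}

theorem Polynomial.prod_X_sub_C_dvd_of_forall_eval_eq_zero (hα : Function.Injective α) {p : F[X]}
    (hp : ∀ i, p.eval (α i) = 0) : ∏ i, (X - C (α i)) ∣ p :=
  Fintype.prod_dvd_of_coprime (pairwise_coprime_X_sub_C hα) fun i => dvd_iff_isRoot.2 (hp i)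

theorem Lagrange.prod_X_sub_C_dvd_nodal_mul_interpolate_sub [DecidableEq ι]
    (hα : Function.Injective α) (r : ι → F) (g : F[X]) (s : Finset ι)
    (hs : ∀ i ∉ s, r i = g.eval (α i)) :
    ∏ i, (X - C (α i)) ∣ nodal s α * (interpolate univ α r - g) := by
  refine prod_X_sub_C_dvd_of_forall_eval_eq_zero hα fun i => ?_
  by_cases hi : i ∈ s
  · rw [eval_mul, eval_nodal_at_node hi, zero_mul]
  · rw [eval_mul, eval_sub, eval_interpolate_at_node _ hα.injOn (mem_univ i), hs i hi, sub_self,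
      mul_zero]

end

theorem power_gao_key_equation_general {F : Type*} [Field F] {n : ℕ}
    (α : Fin n → F) (hα : Function.Injective α)
    (f : F[X]) (e : Fin n → F) (t : ℕ) :
    (∏ i, (X - C (α i))) ∣
      (∏ j ∈ Finset.univ.filter (fun j => e j ≠ 0), (X - C (α j))) *
          Lagrange.interpolate Finset.univ α (fun i => (f.eval (α i) + e i) ^ t) -
        (∏ j ∈ Finset.univ.filter (fun j => e j ≠ 0), (X - C (α j))) * f ^ t := by
  rw [← mul_sub, ← nodal_eq]
  apply prod_X_sub_C_dvd_nodal_mul_interpolate_sub hα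
  intro i hi
  have he : e i = 0 := by simpa using hi
  rw [eval_pow, he, add_zero]

/-- Powered Gao key equations: `Λ · R^(t) ≡ Λ · f^t (mod G)`. -/
theorem power_gao_key_equation {F : Type*} [Field F] {n k : ℕ}
    (α : Fin n → F) (hα : Function.Injective α)
    (f : F[X]) (hf : f.degree < k) (e : Fin n → F) (t : ℕ) (ht : 1 ≤ t) :
    (∏ i, (X - C (α i))) ∣
      (∏ j ∈ Finset.univ.filter (fun j => e j ≠ 0), (X - C (α j))) *
          Lagrange.interpolate Finset.univ α (fun i => (f.eval (α i) + e i) ^ t) -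
        (∏ j ∈ Finset.univ.filter (fun j => e j ≠ 0), (X - C (α j))) * f ^ t :=
  power_gao_key_equation_general α hα f e t
end
end

section
/- Let F be a field, α_1,...,α_n distinct nonzero elements, G = ∏(x - α_i), and fix integers k, t with t(k-1) < n. Suppose λ, R, ω, ψ ∈ F[x] satisfy λR - ωG = ψ, with deg R ≤ n - 1, deg ω ≤ deg λ - 1, and deg ψ ≤ deg λ + t(k-1). Then rev(λ)·rev(R) ≡ rev(ω)·rev(G) (mod x^{n - t(k-1) - 1}), where rev(p) = x^{d}p(1/x) with d being the corresponding degree bound (deg λ for λ, n-1 for R, deg λ - 1 for ω, n + deg λ - 1 for G·ω). -/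
/-!
Reflection is additive and multiplicative once the degree bounds add up, so the left-hand side
is the reflection of `λR - ωG = ψ` with respect to `deg λ + n - 1`. Since
`deg ψ ≤ deg λ + t(k-1)`, the reflected `ψ` has no coefficients below `n - t(k-1) - 1`.
-/

open Polynomial

theorem X_pow_dvd_reflect_of_natDegree_le {R : Type*} [Semiring R] {p : R[X]} {N d : ℕ}
    (hp : p.natDegree ≤ d) : X ^ (N - d) ∣ reflect N p := by
  rw [X_pow_dvd_iff]
  intro i hi
  rw [coeff_reflect, revAt_le (by omega)]
  exact coeff_eq_zero_of_natDegree_lt (by omega)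

theorem reflect_mul_sub_reflect_mul {R : Type*} [Ring R] {p q r s : R[X]} {d m : ℕ}
    (hp : p.natDegree ≤ d) (hq : q.natDegree ≤ m) (hr : r.degree < d)
    (hs : s.natDegree ≤ m + 1) :
    reflect d p * reflect m q - reflect (d - 1) r * reflect (m + 1) s =
      reflect (d + m) (p * q - r * s) := by
  rcases d with _ | d
  · obtain rfl : r = 0 := by simpa using hr
    simpa using (reflect_mul p q hp hq).symm
  · have hr' : r.natDegree ≤ d := natDegree_le_of_degree_le (Order.le_of_lt_succ hr)
    rw [reflect_sub, ← reflect_mul p q hp hq, Nat.add_sub_cancel, ← reflect_mul r s hr' hs,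
      Nat.add_right_comm, Nat.add_assoc]

theorem reversed_key_equation_general {F : Type*} [Field F] {n k t : ℕ}
    (α : Fin n → F)
    (htk : t * (k - 1) < n)
    (lam R ω ψ : F[X])
    (hkey : lam * R - ω * (∏ i, (X - C (α i))) = ψ)
    (hR : R.degree ≤ (n - 1 : ℕ)) (hω : ω.degree < lam.degree)
    (hψ : ψ.degree ≤ lam.degree + (t * (k - 1) : ℕ)) :
    X ^ (n - t * (k - 1) - 1) ∣
      reflect lam.natDegree lam * reflect (n - 1) R -
        reflect (lam.natDegree - 1) ω * reflect n (∏ i, (X - C (α i))) := by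
  obtain ⟨m, rfl⟩ : ∃ m, n = m + 1 := ⟨n - 1, by omega⟩
  have hlam : lam ≠ 0 := by
    rintro rfl
    simp at hω
  rw [degree_eq_natDegree hlam] at hω hψ
  have hψ' : ψ.natDegree ≤ lam.natDegree + t * (k - 1) :=
    natDegree_le_of_degree_le (by exact_mod_cast hψ)
  rw [Nat.add_sub_cancel] at hR ⊢
  rw [reflect_mul_sub_reflect_mul le_rfl (natDegree_le_of_degree_le hR) hω (by simp), hkey]
  convert X_pow_dvd_reflect_of_natDegree_le hψ' using 2
  omega

/-- Reversing the Gao key equation `λR - ωG = ψ` yields the syndrome key equation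
`rev(λ)·rev(R) ≡ rev(ω)·rev(G) (mod x^(n-t(k-1)-1))`, where `rev` is coefficient
reversal with respect to the stated degree bounds (`deg λ` for `λ`, `n-1` for `R`,
`deg λ - 1` for `ω`, `n` for `G`). -/
theorem reversed_key_equation {F : Type*} [Field F] {n k t : ℕ}
    (α : Fin n → F) (hα : Function.Injective α) (h0 : ∀ i, α i ≠ 0)
    (htk : t * (k - 1) < n)
    (lam R ω ψ : F[X])
    (hkey : lam * R - ω * (∏ i, (X - C (α i))) = ψ)
    (hR : R.degree ≤ (n - 1 : ℕ)) (hω : ω.degree < lam.degree)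
    (hψ : ψ.degree ≤ lam.degree + (t * (k - 1) : ℕ)) :
    X ^ (n - t * (k - 1) - 1) ∣
      reflect lam.natDegree lam * reflect (n - 1) R -
        reflect (lam.natDegree - 1) ω * reflect n (∏ i, (X - C (α i))) :=
  reversed_key_equation_general α htk lam R ω ψ hkey hR hω hψ
end

section
/- Decoding failure of Power Gao decoding is invariant under addition of codewords: with notation as in the context, a tuple (λ, ψ_1, ..., ψ_ℓ) is a solution of the key equations for received word r = c + e if and only if (λ, Σ_{s=0}^{1} C(1,s) f^s ψ'_{1-s}, ..., Σ_{s=0}^{ℓ} C(ℓ,s) f^s ψ'_{ℓ-s}) is a solution for received word e, where (λ, ψ'_1, ..., ψ'_ℓ) ranges over solutions for e (with ψ'_0 = λ). In particular, the sets of solutions for r and for e are in a degree-preserving bijection on the first component, so the minimal first-component degree among solutions is the same for r and for e. -/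
/-!
Evaluated at the nodes, the key equation `λ R_w^(t) ≡ ψₜ (mod G)` says `ψₜ(αᵢ) = λ(αᵢ) wᵢᵗ`.
Since `rᵢ = f(αᵢ) + eᵢ`, the binomial theorem shows that the binomial shift
`ψₜ = Σₛ C(t,s) fˢ ψ'_{t-s}` turns these conditions for `e` into those for `r`, and because
`deg f ≤ k - 1` it respects the degree bounds `deg ψₜ ≤ deg λ + t(k-1)`. The shift is
unitriangular, so both kinds of conditions also transfer back, which gives the equivalence.
Shifting by `-f` instead of `f` moves solutions from `r` back to `e` with the same `λ`.
-/

open Polynomial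

/-- `(λ, ψ₁, …, ψ_ℓ)` is a solution of the Power Gao key equations for the
received word `w`: `λ ≠ 0`, `λ·R_w^(t) ≡ ψₜ (mod G)` and
`deg ψₜ ≤ deg λ + t(k-1)` for `t = 1, …, ℓ`. -/
def IsPowerSolution {F : Type*} [Field F] {n : ℕ} (α : Fin n → F) (k ℓ : ℕ)
    (w : Fin n → F) (lam : F[X]) (ψ : ℕ → F[X]) : Prop :=
  lam ≠ 0 ∧ ∀ t, 1 ≤ t → t ≤ ℓ →
    (∏ i, (X - C (α i))) ∣
        lam * Lagrange.interpolate Finset.univ α (fun i => w i ^ t) - ψ t ∧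
      (ψ t).degree ≤ lam.degree + (t * (k - 1) : ℕ)

open Finset

section BinomialShift

variable {R S : Type*}

def binomialShift [Semiring R] (a : R) (u : ℕ → R) (t : ℕ) : R :=
  ∑ s ∈ range (t + 1), (t.choose s : R) * a ^ s * u (t - s)

section Semiring

variable [Semiring R] (a : R) (u : ℕ → R)

theorem binomialShift_eq_add_sum (t : ℕ) :
    binomialShift a u t =
      u t + ∑ s ∈ range t, (t.choose (s + 1) : R) * a ^ (s + 1) * u (t - (s + 1)) := by
  rw [binomialShift, sum_range_succ', add_comm]
  simp

theorem binomialShift_zero : binomialShift a u 0 = u 0 := by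
  simp [binomialShift]

theorem binomialShift_congr {u v : ℕ → R} {t : ℕ} (h : ∀ j ≤ t, u j = v j) :
    binomialShift a u t = binomialShift a v t :=
  sum_congr rfl fun s _ => by rw [h _ (Nat.sub_le t s)]

theorem map_binomialShift [Semiring S] (φ : R →+* S) (t : ℕ) :
    φ (binomialShift a u t) = binomialShift (φ a) (fun j => φ (u j)) t := by
  simp [binomialShift, map_sum]

end Semiring

theorem binomialShift_mul_pow [CommSemiring R] (a b e : R) (t : ℕ) :
    binomialShift a (fun j => b * e ^ j) t = b * (a + e) ^ t := by
  rw [binomialShift, add_pow, mul_sum]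
  refine sum_congr rfl fun s _ => ?_
  ring

/-- A binomial shift is unitriangular, hence invertible on every initial segment. -/
theorem eqOn_iff_binomialShift [Ring R] (a : R) (u v : ℕ → R) (m : ℕ) :
    (∀ j ≤ m, u j = v j) ↔ ∀ t ≤ m, binomialShift a u t = binomialShift a v t := by
  refine ⟨fun h t ht => binomialShift_congr a fun j hj => h j (hj.trans ht), fun h => ?_⟩
  intro t
  induction t using Nat.strong_induction_on with
  | _ t ih =>
    intro ht
    have htail : ∑ s ∈ range t, (t.choose (s + 1) : R) * a ^ (s + 1) * u (t - (s + 1)) =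
        ∑ s ∈ range t, (t.choose (s + 1) : R) * a ^ (s + 1) * v (t - (s + 1)) :=
      sum_congr rfl fun s hs => by
        rw [ih _ (by rw [mem_range] at hs; omega) (by omega)]
    have := h t ht
    rw [binomialShift_eq_add_sum, binomialShift_eq_add_sum, htail] at this
    exact add_right_cancel this

end BinomialShift

section Degree

variable {R : Type*} [Ring R] {f : R[X]} {m : ℕ}

theorem degree_choose_mul_pow_mul_le (hf : f.degree ≤ m) {D : WithBot ℕ} {p : R[X]} {s t : ℕ}
    (hst : s ≤ t) (hp : p.degree ≤ D + ((t - s) * m : ℕ)) :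
    ((t.choose s : R[X]) * f ^ s * p).degree ≤ D + (t * m : ℕ) := by
  have hfs : (f ^ s).degree ≤ (s * m : ℕ) := by
    rw [Nat.cast_mul]; exact degree_pow_le_of_le s hf
  refine (degree_mul_le_of_le (degree_mul_le_of_le (degree_natCast_le _) hfs) hp).trans_eq ?_
  rw [zero_add, add_left_comm, ← Nat.cast_add, ← add_mul, Nat.add_sub_cancel' hst]

theorem degree_binomialShift_le (hf : f.degree ≤ m) {D : WithBot ℕ} {u : ℕ → R[X]} {t : ℕ}
    (hu : ∀ j ≤ t, (u j).degree ≤ D + (j * m : ℕ)) :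
    (binomialShift f u t).degree ≤ D + (t * m : ℕ) :=
  (degree_sum_le _ _).trans <| Finset.sup_le fun s hs =>
    degree_choose_mul_pow_mul_le hf (by rw [mem_range] at hs; omega) (hu _ (Nat.sub_le t s))

theorem degree_le_iff_binomialShift (hf : f.degree ≤ m) (D : WithBot ℕ) (u : ℕ → R[X])
    (ℓ : ℕ) : (∀ j ≤ ℓ, (u j).degree ≤ D + (j * m : ℕ)) ↔
      ∀ t ≤ ℓ, (binomialShift f u t).degree ≤ D + (t * m : ℕ) := by
  refine ⟨fun h t ht => degree_binomialShift_le hf fun j hj => h j (hj.trans ht), fun h => ?_⟩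
  intro t
  induction t using Nat.strong_induction_on with
  | _ t ih =>
    intro ht
    have htail : (∑ s ∈ range t,
        (t.choose (s + 1) : R[X]) * f ^ (s + 1) * u (t - (s + 1))).degree ≤ D + (t * m : ℕ) :=
      (degree_sum_le _ _).trans <| Finset.sup_le fun s hs => by
        simp only [mem_range] at hs
        exact degree_choose_mul_pow_mul_le hf (by omega) (ih _ (by omega) (by omega))
    rw [← add_sub_cancel_right (u t), ← binomialShift_eq_add_sum]
    exact (degree_sub_le _ _).trans (max_le (h t ht) htail)

end Degree

section KeyEquations

variable {F : Type*} [Field F] {n : ℕ} {α : Fin n → F}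

theorem prod_X_sub_C_dvd_iff {ι : Type*} [Fintype ι] {v : ι → F} (hv : Function.Injective v)
    {p : F[X]} : (∏ i, (X - C (v i))) ∣ p ↔ ∀ i, p.eval (v i) = 0 :=
  ⟨fun h i => dvd_iff_isRoot.1 ((dvd_prod_of_mem (fun j => X - C (v j)) (mem_univ i)).trans h),
    fun h => Fintype.prod_dvd_of_coprime (pairwise_coprime_X_sub_C hv)
      fun i => dvd_iff_isRoot.2 (h i)⟩

theorem prod_X_sub_C_dvd_mul_interpolate_sub_iff (hα : Function.Injective α) (w : Fin n → F)
    (t : ℕ) (lam p : F[X]) :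
    (∏ i, (X - C (α i))) ∣ lam * Lagrange.interpolate univ α (fun i => w i ^ t) - p ↔
      ∀ i, lam.eval (α i) * w i ^ t = p.eval (α i) := by
  simp only [prod_X_sub_C_dvd_iff hα, eval_sub, eval_mul,
    Lagrange.eval_interpolate_at_node _ hα.injOn (mem_univ _), sub_eq_zero]

theorem isPowerSolution_iff (hα : Function.Injective α) {k ℓ : ℕ} (w : Fin n → F)
    {lam : F[X]} {ψ : ℕ → F[X]} (hψ : ψ 0 = lam) :
    IsPowerSolution α k ℓ w lam ψ ↔ lam ≠ 0 ∧
      (∀ i, ∀ t ≤ ℓ, lam.eval (α i) * w i ^ t = (ψ t).eval (α i)) ∧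
      ∀ t ≤ ℓ, (ψ t).degree ≤ lam.degree + (t * (k - 1) : ℕ) := by
  simp only [IsPowerSolution, prod_X_sub_C_dvd_mul_interpolate_sub_iff hα]
  refine and_congr_right fun _ => ⟨fun h => ⟨fun i t ht => ?_, fun t ht => ?_⟩,
    fun h t ht₁ ht₂ => ⟨fun i => h.1 i t ht₂, h.2 t ht₂⟩⟩
  · rcases t.eq_zero_or_pos with rfl | ht₀
    · simp [hψ]
    · exact (h t ht₀ ht).1 i
  · rcases t.eq_zero_or_pos with rfl | ht₀
    · simp [hψ]
    · exact (h t ht₀ ht).2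

theorem isPowerSolution_iff_binomialShift (hα : Function.Injective α) {k ℓ : ℕ} {f : F[X]}
    (hf : f.degree < k) (w : Fin n → F) {lam : F[X]} {ψ : ℕ → F[X]} (hψ : ψ 0 = lam) :
    IsPowerSolution α k ℓ w lam ψ ↔
      IsPowerSolution α k ℓ (fun i => f.eval (α i) + w i) lam (binomialShift f ψ) := by
  have hf' : f.degree ≤ (k - 1 : ℕ) := by
    rcases eq_or_ne f 0 with rfl | hf0
    · simp
    · exact degree_le_of_natDegree_le (by have := (natDegree_lt_iff_degree_lt hf0).2 hf; omega)
  rw [isPowerSolution_iff hα w hψ, isPowerSolution_iff hα _ (by rw [binomialShift_zero, hψ]),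
    degree_le_iff_binomialShift hf']
  refine and_congr_right fun _ => and_congr_left fun _ => forall_congr' fun i => ?_
  simpa only [← coe_evalRingHom, map_binomialShift, binomialShift_mul_pow] using
    eqOn_iff_binomialShift (f.eval (α i)) (fun j => lam.eval (α i) * w i ^ j)
      (fun j => (ψ j).eval (α i)) ℓ

theorem IsPowerSolution.update_zero {k ℓ : ℕ} {w : Fin n → F} {lam : F[X]} {ψ : ℕ → F[X]}
    (h : IsPowerSolution α k ℓ w lam ψ) :
    IsPowerSolution α k ℓ w lam (Function.update ψ 0 lam) :=
  ⟨h.1, fun t ht₁ ht₂ => by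
    simpa only [Function.update_of_ne (Nat.one_le_iff_ne_zero.1 ht₁)] using h.2 t ht₁ ht₂⟩

theorem exists_isPowerSolution_add (hα : Function.Injective α) {k ℓ : ℕ} {f : F[X]}
    (hf : f.degree < k) {w : Fin n → F} {lam : F[X]}
    (h : ∃ ψ, IsPowerSolution α k ℓ w lam ψ) :
    ∃ ψ, IsPowerSolution α k ℓ (fun i => f.eval (α i) + w i) lam ψ :=
  let ⟨_, hψ⟩ := h
  ⟨_, (isPowerSolution_iff_binomialShift hα hf w (Function.update_self ..)).1 hψ.update_zero⟩

theorem exists_isPowerSolution_add_iff (hα : Function.Injective α) {k ℓ : ℕ} {f : F[X]}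
    (hf : f.degree < k) (w : Fin n → F) (lam : F[X]) :
    (∃ ψ, IsPowerSolution α k ℓ (fun i => f.eval (α i) + w i) lam ψ) ↔
      ∃ ψ, IsPowerSolution α k ℓ w lam ψ := by
  refine ⟨fun h => ?_, exists_isPowerSolution_add hα hf⟩
  simpa using exists_isPowerSolution_add hα (f := -f) (by rwa [degree_neg]) h

end KeyEquations

theorem power_gao_failure_invariant_general {F : Type*} [Field F] {n k ℓ : ℕ}
    (α : Fin n → F) (hα : Function.Injective α)
    (f : F[X]) (hf : f.degree < k) (e : Fin n → F) :
    (∀ (lam : F[X]) (ψ' : ℕ → F[X]), ψ' 0 = lam →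
      (IsPowerSolution α k ℓ e lam ψ' ↔
        IsPowerSolution α k ℓ (fun i => f.eval (α i) + e i) lam
          (fun t => ∑ s ∈ Finset.range (t + 1), (t.choose s : F[X]) * f ^ s * ψ' (t - s)))) ∧
    {d : ℕ | ∃ lam ψ, IsPowerSolution α k ℓ (fun i => f.eval (α i) + e i) lam ψ ∧
        lam.natDegree = d} =
      {d : ℕ | ∃ lam ψ, IsPowerSolution α k ℓ e lam ψ ∧ lam.natDegree = d} := by
  refine ⟨fun lam ψ' hψ' => isPowerSolution_iff_binomialShift hα hf e hψ', ?_⟩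
  ext d
  simp only [Set.mem_ofPred_eq, exists_and_right, exists_isPowerSolution_add_iff hα hf]

/-- Failure of Power Gao decoding is invariant under addition of codewords:
`(λ, ψ'₁,…,ψ'_ℓ)` is a solution for the error `e` iff the binomially transformed
tuple `(λ, Σₛ C(t,s) fˢ ψ'_{t-s})` is a solution for `r = c + e`; in particular
the sets of degrees of first components of solutions for `r` and `e` coincide. -/
theorem power_gao_failure_invariant {F : Type*} [Field F] {n k ℓ : ℕ}
    (α : Fin n → F) (hα : Function.Injective α)
    (hℓ : 1 ≤ ℓ) (hn : ℓ * (k - 1) < n) (f : F[X]) (hf : f.degree < k) (e : Fin n → F) :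
    (∀ (lam : F[X]) (ψ' : ℕ → F[X]), ψ' 0 = lam →
      (IsPowerSolution α k ℓ e lam ψ' ↔
        IsPowerSolution α k ℓ (fun i => f.eval (α i) + e i) lam
          (fun t => ∑ s ∈ Finset.range (t + 1), (t.choose s : F[X]) * f ^ s * ψ' (t - s)))) ∧
    {d : ℕ | ∃ lam ψ, IsPowerSolution α k ℓ (fun i => f.eval (α i) + e i) lam ψ ∧
        lam.natDegree = d} =
      {d : ℕ | ∃ lam ψ, IsPowerSolution α k ℓ e lam ψ ∧ lam.natDegree = d} :=
  power_gao_failure_invariant_general α hα f hf e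
end

section
/- Let F be a field, α_1,...,α_n distinct, G = ∏(x-α_i). Suppose e ∈ F^n with support E and error locator Λ = ∏_{j∈E}(x-α_j), and let Υ = G/Λ. Let R^(t) be the Lagrange interpolant of e_i^t at α_i. Then Υ divides R^(t), and moreover for any λ, ψ ∈ F[x], λ R^(t) ≡ ψ (mod G) implies Υ divides ψ, and setting E^(t) = R^(t)/Υ and ψ̂ = ψ/Υ, the congruence λ R^(t) ≡ ψ (mod G) holds if and only if λ E^(t) ≡ ψ̂ (mod Λ). -/
/-!
Since `e_j = 0` off the error support, `R^(t)` vanishes at every `α_j` with `j ∉ E`, and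
these are distinct, so `Υ ∣ R^(t)`. As `G = Υ Λ`, any `ψ` with `G ∣ λ R^(t) - ψ` is then
divisible by `Υ`, and `λ R^(t) - ψ = Υ (λ E^(t) - ψ̂)`, so cancelling the nonzero factor `Υ`
turns divisibility by `G` into divisibility by `Λ`.
-/

open Polynomial

theorem dvd_of_mul_right_dvd_mul_sub {R : Type*} [CommRing R] {u l r p c : R} (hr : u ∣ r)
    (h : u * l ∣ c * r - p) : u ∣ p :=
  (dvd_sub_right (hr.mul_left c)).mp (dvd_of_mul_right_dvd h)

theorem mul_dvd_mul_sub_iff_dvd_mul_div_sub_div {R : Type*} [EuclideanDomain R] {u l r p c : R}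
    (hu : u ≠ 0) (hr : u ∣ r) (hp : u ∣ p) :
    u * l ∣ c * r - p ↔ l ∣ c * (r / u) - p / u := by
  obtain ⟨q, rfl⟩ := hr
  obtain ⟨p', rfl⟩ := hp
  rw [mul_div_cancel_left₀ _ hu, mul_div_cancel_left₀ _ hu,
    show c * (u * q) - u * p' = u * (c * q - p') by ring, mul_dvd_mul_iff_left hu]

theorem Polynomial.prod_X_sub_C_dvd_of_forall_isRoot {K ι : Type*} [Field K] {s : Finset ι}
    {v : ι → K} (hv : Set.InjOn v s) {p : K[X]} (hp : ∀ i ∈ s, p.IsRoot (v i)) :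
    ∏ i ∈ s, (X - C (v i)) ∣ p :=
  Finset.prod_dvd_of_coprime
    (fun _ hi _ hj hij =>
      isCoprime_X_sub_C_of_isUnit_sub (sub_ne_zero_of_ne (hv.ne hi hj hij)).isUnit)
    fun i hi => dvd_iff_isRoot.mpr (hp i hi)

theorem Lagrange.prod_X_sub_C_dvd_interpolate {F ι : Type*} [Field F] [DecidableEq ι]
    {s t : Finset ι} {v r : ι → F} (hvs : Set.InjOn v s) (hts : t ⊆ s)
    (hr : ∀ i ∈ t, r i = 0) : ∏ i ∈ t, (X - C (v i)) ∣ interpolate s v r :=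
  prod_X_sub_C_dvd_of_forall_isRoot (hvs.mono hts) fun i hi => by
    rw [IsRoot, eval_interpolate_at_node r hvs (hts hi), hr i hi]

/-- With `Λ` the error locator and `Υ = G/Λ` the "truth locator", the truth
locator divides `R^(t)`; moreover `λR^(t) ≡ ψ (mod G)` forces `Υ ∣ ψ`, and (for
`Υ ∣ ψ`) the congruence holds iff `λ·(R^(t)/Υ) ≡ ψ/Υ (mod Λ)`. -/
theorem truth_locator_reduction {F : Type*} [Field F] [DecidableEq F] {n : ℕ}
    (α : Fin n → F) (hα : Function.Injective α)
    (e : Fin n → F) (t : ℕ) (ht : 1 ≤ t) :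
    (∏ j ∈ Finset.univ.filter (fun j => e j = 0), (X - C (α j))) ∣
        Lagrange.interpolate Finset.univ α (fun i => e i ^ t) ∧
    ∀ lam ψ : F[X],
      ((∏ i, (X - C (α i))) ∣
          lam * Lagrange.interpolate Finset.univ α (fun i => e i ^ t) - ψ →
        (∏ j ∈ Finset.univ.filter (fun j => e j = 0), (X - C (α j))) ∣ ψ) ∧
      ((∏ j ∈ Finset.univ.filter (fun j => e j = 0), (X - C (α j))) ∣ ψ →
        ((∏ i, (X - C (α i))) ∣
            lam * Lagrange.interpolate Finset.univ α (fun i => e i ^ t) - ψ ↔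
          (∏ j ∈ Finset.univ.filter (fun j => e j ≠ 0), (X - C (α j))) ∣
            lam * (Lagrange.interpolate Finset.univ α (fun i => e i ^ t) /
                ∏ j ∈ Finset.univ.filter (fun j => e j = 0), (X - C (α j))) -
              ψ / ∏ j ∈ Finset.univ.filter (fun j => e j = 0), (X - C (α j)))) := by
  have hG : ∏ i, (X - C (α i)) =
      (∏ j ∈ Finset.univ.filter (fun j => e j = 0), (X - C (α j))) *
        ∏ j ∈ Finset.univ.filter (fun j => e j ≠ 0), (X - C (α j)) :=
    (Finset.prod_filter_mul_prod_filter_not _ _ _).symm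
  have hΥ : (∏ j ∈ Finset.univ.filter (fun j => e j = 0), (X - C (α j))) ∣
      Lagrange.interpolate Finset.univ α (fun i => e i ^ t) :=
    Lagrange.prod_X_sub_C_dvd_interpolate hα.injOn (Finset.subset_univ _) fun j hj => by
      rw [(Finset.mem_filter.mp hj).2, zero_pow (by omega)]
  have hΥ0 : (∏ j ∈ Finset.univ.filter (fun j => e j = 0), (X - C (α j))) ≠ 0 :=
    (monic_prod_of_monic _ _ fun j _ => monic_X_sub_C (α j)).ne_zero
  refine ⟨hΥ, fun lam ψ => ⟨fun h => ?_, fun hψ => ?_⟩⟩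
  · exact dvd_of_mul_right_dvd_mul_sub hΥ (hG ▸ h)
  · rw [hG]
    exact mul_dvd_mul_sub_iff_dvd_mul_div_sub_div hΥ0 hΥ hψ
end

section
/- Let F be a field, Λ = ∏_{j∈E}(x - α_j) with distinct α_j, and let E_p, E_p' be polynomials of degree < deg Λ with all values E_p(α_j), E_p'(α_j) nonzero. Suppose λ ∈ F[x] with gcd(λ, Λ) = 1 and ψ̂_1, ψ̂_2 ∈ F[x] satisfy λ E_p ≡ ψ̂_1, λ E_p^2 ≡ ψ̂_2 (mod Λ) and also λ E_p' ≡ ψ̂_1, λ E_p'^2 ≡ ψ̂_2 (mod Λ). Then E_p = E_p'. -/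
open Polynomial

theorem Polynomial.degree_prod_fin_X_sub_C {R : Type*} [CommRing R] [Nontrivial R] {m : ℕ}
    (α : Fin m → R) : (∏ j, (X - C (α j))).degree = (m : WithBot ℕ) := by
  rw [degree_eq_natDegree (monic_prod_of_monic _ _ fun j _ ↦ monic_X_sub_C (α j)).ne_zero,
    natDegree_finsetProd_X_sub_C_eq_card, Finset.card_fin]

theorem Polynomial.eq_of_dvd_sub_of_degree_lt {R : Type*} [CommRing R] [NoZeroDivisors R]
    {p q d : R[X]} (h : d ∣ p - q) (hp : p.degree < d.degree) (hq : q.degree < d.degree) :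
    p = q :=
  sub_eq_zero.mp <| eq_zero_of_dvd_of_degree_lt h <| (degree_sub_le p q).trans_lt (max_lt hp hq)

theorem IsCoprime.dvd_sub_of_dvd_mul_sub {R : Type*} [CommRing R] {l d a a' b : R}
    (hcop : IsCoprime l d) (h : d ∣ l * a - b) (h' : d ∣ l * a' - b) : d ∣ a - a' :=
  hcop.symm.dvd_of_dvd_mul_left <| by
    simpa only [mul_sub, sub_sub_sub_cancel_right] using dvd_sub h h'

theorem interpolant_unique_of_coprime_general {F : Type*} [Field F] {m : ℕ}
    (α : Fin m → F)
    (Ep Ep' : F[X]) (hd : Ep.degree < m) (hd' : Ep'.degree < m)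
    (lam ψ1 : F[X]) (hcop : IsCoprime lam (∏ j, (X - C (α j))))
    (h1 : (∏ j, (X - C (α j))) ∣ lam * Ep - ψ1)
    (h1' : (∏ j, (X - C (α j))) ∣ lam * Ep' - ψ1) :
    Ep = Ep' := by
  rw [← degree_prod_fin_X_sub_C α] at hd hd'
  exact eq_of_dvd_sub_of_degree_lt (hcop.dvd_sub_of_dvd_mul_sub h1 h1') hd hd'

/-- When `gcd(λ, Λ) = 1`, the pair of congruences `λEₚ ≡ ψ̂₁`, `λEₚ² ≡ ψ̂₂ (mod Λ)`
determines the interpolant `Eₚ` uniquely. -/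
theorem interpolant_unique_of_coprime {F : Type*} [Field F] {m : ℕ}
    (α : Fin m → F) (hα : Function.Injective α)
    (Ep Ep' : F[X]) (hd : Ep.degree < m) (hd' : Ep'.degree < m)
    (hv : ∀ j, Ep.eval (α j) ≠ 0) (hv' : ∀ j, Ep'.eval (α j) ≠ 0)
    (lam ψ1 ψ2 : F[X]) (hcop : IsCoprime lam (∏ j, (X - C (α j))))
    (h1 : (∏ j, (X - C (α j))) ∣ lam * Ep - ψ1)
    (h2 : (∏ j, (X - C (α j))) ∣ lam * Ep ^ 2 - ψ2)
    (h1' : (∏ j, (X - C (α j))) ∣ lam * Ep' - ψ1)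
    (h2' : (∏ j, (X - C (α j))) ∣ lam * Ep' ^ 2 - ψ2) :
    Ep = Ep' :=
  interpolant_unique_of_coprime_general α Ep Ep' hd hd' lam ψ1 hcop h1 h1'
end

section
/- Let F be a field, α_1,...,α_n distinct, G = ∏(x - α_i), f ∈ F[x] with deg f < k, e ∈ F^n with support E of size ε, Λ = ∏_{j∈E}(x-α_j), and r_i = f(α_i)+e_i. If 2ε < n - k + 1 (i.e., fewer than half the minimum distance errors), then for any solution (λ, ψ_1) with λ monic, λ ≠ 0, deg λ ≤ ε, λ R^(1) ≡ ψ_1 (mod G) and deg ψ_1 ≤ deg λ + k - 1 (where R^(1) is the interpolant of r_i at α_i), the quotient ψ_1/λ is a polynomial and equals f. -/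
open Polynomial Lagrange

/-!
With `Λ` the error locator, the key equation gives `ψ(αᵢ) = λ(αᵢ) (f(αᵢ) + eᵢ)` at every node,
and `Λ(αᵢ) eᵢ = 0`, so `Λ (ψ - λ f)` vanishes at all `n` nodes. Its degree is at most
`ε + ε + (k - 1) < n`, hence it is zero, and `Λ ≠ 0` gives `ψ = λ f`.
-/

namespace GaoDecoding

variable {R ι : Type*}

theorem eval_nodal_mul_eq_zero [CommRing R] {s : Finset ι} {v e : ι → R}
    (hs : ∀ i, e i ≠ 0 → i ∈ s) (i : ι) : (nodal s v).eval (v i) * e i = 0 := by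
  by_cases hi : e i = 0
  · rw [hi, mul_zero]
  · rw [eval_nodal_at_node (hs i hi), zero_mul]

theorem eval_eq_zero_of_nodal_dvd [CommRing R] {s : Finset ι} {v : ι → R} {p : R[X]}
    (h : nodal s v ∣ p) {i : ι} (hi : i ∈ s) : p.eval (v i) = 0 :=
  eval_eq_zero_of_dvd_of_eval_eq_zero h (eval_nodal_at_node hi)

theorem eval_mul_sub_mul_eq_zero [CommRing R] {Λ lam ψ r f : R[X]} {x c : R}
    (hkey : (lam * r - ψ).eval x = 0) (hr : r.eval x = f.eval x + c) (hΛ : Λ.eval x * c = 0) :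
    (Λ * (ψ - lam * f)).eval x = 0 := by
  simp only [eval_mul, eval_sub] at hkey ⊢
  rw [hr] at hkey
  linear_combination (-Λ.eval x) * hkey + lam.eval x * hΛ

theorem natDegree_sub_mul_le [Ring R] {lam ψ f : R[X]} {k : ℕ}
    (hψ : ψ.degree ≤ lam.degree + (k - 1 : ℕ)) (hf : f.degree < k) :
    (ψ - lam * f).natDegree ≤ lam.natDegree + (k - 1) := by
  have hψ' : ψ.natDegree ≤ lam.natDegree + (k - 1) :=
    natDegree_le_iff_degree_le.2 <| by
      push_cast
      exact hψ.trans (add_le_add_left degree_le_natDegree _)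
  have hf' : f.natDegree ≤ k - 1 := by
    rcases eq_or_ne f 0 with rfl | hf0
    · simp
    · have := (natDegree_lt_iff_degree_lt hf0).2 hf
      omega
  exact (natDegree_sub_le _ _).trans (max_le hψ' (natDegree_mul_le.trans (by omega)))

end GaoDecoding

open GaoDecoding

/-- Correctness of Gao decoding within half the minimum distance: if fewer than
`(n-k+1)/2` errors occurred, then any monic minimal solution `(λ, ψ₁)` of the
Gao key equation recovers the information polynomial as `ψ₁/λ = f`. -/
theorem gao_decoding_correct {F : Type*} [Field F] [DecidableEq F] {n k : ℕ}
    (hk : 1 ≤ k) (hkn : k ≤ n)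
    (α : Fin n → F) (hα : Function.Injective α)
    (f : F[X]) (hf : f.degree < k) (e : Fin n → F)
    (hε : 2 * (Finset.univ.filter fun i => e i ≠ 0).card < n - k + 1)
    (lam ψ : F[X]) (hmonic : lam.Monic)
    (hdeg : lam.natDegree ≤ (Finset.univ.filter fun i => e i ≠ 0).card)
    (hkey : (∏ i, (X - C (α i))) ∣
      lam * Lagrange.interpolate Finset.univ α (fun i => f.eval (α i) + e i) - ψ)
    (hψ : ψ.degree ≤ lam.degree + (k - 1 : ℕ)) :
    lam ∣ ψ ∧ ψ / lam = f := by
  set E := Finset.univ.filter fun i => e i ≠ 0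
  have hvanish : nodal E α * (ψ - lam * f) = 0 := by
    refine eq_zero_of_degree_lt_of_eval_index_eq_zero Finset.univ hα.injOn ?_ fun i _ => ?_
    · rw [Finset.card_fin]
      refine degree_le_natDegree.trans_lt (WithBot.coe_lt_coe.2 ?_)
      calc (nodal E α * (ψ - lam * f)).natDegree
          ≤ E.card + (lam.natDegree + (k - 1)) := by
            rw [← natDegree_nodal (v := α)]
            exact natDegree_mul_le.trans (add_le_add_right (natDegree_sub_mul_le hψ hf) _)
        _ < n := by omega
    · exact eval_mul_sub_mul_eq_zero (eval_eq_zero_of_nodal_dvd hkey (Finset.mem_univ i))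
        (eval_interpolate_at_node _ hα.injOn (Finset.mem_univ i))
        (eval_nodal_mul_eq_zero (by simp [E]) i)
  have hψf : ψ = lam * f := sub_eq_zero.1 ((mul_eq_zero.1 hvanish).resolve_left nodal_ne_zero)
  exact ⟨⟨f, hψf⟩, by rw [hψf, mul_div_cancel_left₀ _ hmonic.ne_zero]⟩
end

section
/- Let F be a field, Λ ∈ F[x] squarefree of degree ε splitting into distinct linear factors, g a nontrivial divisor of Λ, and suppose λ, ψ̂_1, ψ̂_2 ∈ F[x] satisfy λ E_p^t ≡ ψ̂_t (mod Λ) for t = 1, 2, where E_p has nonzero values at all roots of Λ. If g = gcd(λ, Λ) then g divides both ψ̂_1 and ψ̂_2, and E_p ≡ (ψ̂_2/g)·((ψ̂_1/g)^{-1}) (mod Λ/g), where the inverse is taken modulo Λ/g. -/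
/-!
Since `g` divides both `λ` and `Λ`, it divides `ψ̂_t ≡ λ E_p^t (mod Λ)`, and both congruences
may be divided by `g`. Dividing `λ` and `Λ` by their gcd leaves coprime cofactors, and `E_p` is
a unit modulo `Λ` because it vanishes at no root of `Λ`; hence `ψ̂₁/g ≡ (λ/g) E_p` is a unit
modulo `Λ/g`. Finally `ψ̂₂ ≡ λ E_p² ≡ ψ̂₁ E_p (mod Λ)`, which divided by `g` is the claimed
congruence.
-/

open Polynomial

theorem IsCoprime.of_dvd_sub {R : Type*} [CommRing R] {a b n : R} (hb : IsCoprime b n)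
    (h : n ∣ b - a) : IsCoprime a n := by
  obtain ⟨c, hc⟩ := h
  rw [show a = b + n * -c by linear_combination -hc]
  exact hb.add_mul_left_left (-c)

namespace EuclideanDomain

variable {R : Type*} [EuclideanDomain R]

theorem isCoprime_div_gcd_div_gcd [DecidableEq R] {p q : R} (hpq : gcd p q ≠ 0) :
    IsCoprime (p / gcd p q) (q / gcd p q) := by
  refine ⟨gcdA p q, gcdB p q, mul_left_cancel₀ hpq ?_⟩
  calc gcd p q * (gcdA p q * (p / gcd p q) + gcdB p q * (q / gcd p q))
      = gcdA p q * (gcd p q * (p / gcd p q)) + gcdB p q * (gcd p q * (q / gcd p q)) := by ring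
    _ = p * gcdA p q + q * gcdB p q := by
      rw [EuclideanDomain.mul_div_cancel' hpq (gcd_dvd_left p q),
        EuclideanDomain.mul_div_cancel' hpq (gcd_dvd_right p q)]
      ring
    _ = gcd p q * 1 := by rw [mul_one, gcd_eq_gcd_ab]

theorem div_dvd_div_mul_sub_div {g n a b c : R} (hg : g ≠ 0) (hn : g ∣ n) (ha : g ∣ a)
    (hb : g ∣ b) (h : n ∣ a * c - b) : n / g ∣ a / g * c - b / g := by
  apply (mul_dvd_mul_iff_left hg).mp
  rwa [EuclideanDomain.mul_div_cancel' hg hn, mul_sub, ← mul_assoc,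
    EuclideanDomain.mul_div_cancel' hg ha, EuclideanDomain.mul_div_cancel' hg hb]

end EuclideanDomain

theorem Polynomial.isCoprime_prod_X_sub_C_of_eval_ne_zero {F ι : Type*} [Field F] (s : Finset ι)
    (α : ι → F) {p : F[X]} (hp : ∀ i ∈ s, p.eval (α i) ≠ 0) :
    IsCoprime (∏ i ∈ s, (X - C (α i))) p :=
  IsCoprime.prod_left fun i hi => (irreducible_X_sub_C (α i)).coprime_iff_not_dvd.mpr <| by
    rw [dvd_iff_isRoot]
    exact hp i hi

theorem reduced_congruence_of_gcd_general {F : Type*} [Field F] [DecidableEq F] {m : ℕ}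
    (α : Fin m → F) (hα : Function.Injective α)
    (e : Fin m → F) (he : ∀ j, e j ≠ 0) (lam ψ1 ψ2 g : F[X])
    (hg : g = EuclideanDomain.gcd lam (∏ j, (X - C (α j))))
    (h1 : (∏ j, (X - C (α j))) ∣
      lam * Lagrange.interpolate Finset.univ α e - ψ1)
    (h2 : (∏ j, (X - C (α j))) ∣
      lam * (Lagrange.interpolate Finset.univ α e) ^ 2 - ψ2) :
    g ∣ ψ1 ∧ g ∣ ψ2 ∧
      IsCoprime (ψ1 / g) ((∏ j, (X - C (α j))) / g) ∧
      ((∏ j, (X - C (α j))) / g) ∣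
        (ψ1 / g) * Lagrange.interpolate Finset.univ α e - ψ2 / g := by
  set Λ : F[X] := ∏ j, (X - C (α j))
  set E : F[X] := Lagrange.interpolate Finset.univ α e
  have hΛ0 : Λ ≠ 0 := (monic_prod_of_monic _ _ fun j _ => monic_X_sub_C (α j)).ne_zero
  have hg0 : g ≠ 0 := hg ▸ fun h => hΛ0 (EuclideanDomain.gcd_eq_zero_iff.mp h).2
  have hglam : g ∣ lam := hg ▸ EuclideanDomain.gcd_dvd_left lam Λ
  have hgΛ : g ∣ Λ := hg ▸ EuclideanDomain.gcd_dvd_right lam Λ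
  have hgψ1 : g ∣ ψ1 := (dvd_sub_right (hglam.mul_right E)).mp (hgΛ.trans h1)
  have hgψ2 : g ∣ ψ2 := (dvd_sub_right (hglam.mul_right (E ^ 2))).mp (hgΛ.trans h2)
  have hEΛ : IsCoprime E (Λ / g) :=
    ((isCoprime_prod_X_sub_C_of_eval_ne_zero _ α fun j hj => by
      rw [Lagrange.eval_interpolate_at_node _ hα.injOn hj]
      exact he j).of_isCoprime_of_dvd_left (EuclideanDomain.div_dvd_of_dvd hgΛ)).symm
  have hlamΛ : IsCoprime (lam / g) (Λ / g) :=
    hg ▸ EuclideanDomain.isCoprime_div_gcd_div_gcd (hg ▸ hg0)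
  have hψ1 : Λ / g ∣ lam / g * E - ψ1 / g :=
    EuclideanDomain.div_dvd_div_mul_sub_div hg0 hgΛ hglam hgψ1 h1
  have hψ2 : Λ ∣ ψ1 * E - ψ2 := by
    have := dvd_sub h2 (h1.mul_right E)
    rwa [show lam * E ^ 2 - ψ2 - (lam * E - ψ1) * E = ψ1 * E - ψ2 by ring] at this
  exact ⟨hgψ1, hgψ2, (hlamΛ.mul_left hEΛ).of_dvd_sub hψ1,
    EuclideanDomain.div_dvd_div_mul_sub_div hg0 hgΛ hgψ1 hgψ2 hψ2⟩

/-- If `g = gcd(λ, Λ)` is a nontrivial proper divisor of the squarefree `Λ`,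
then `g` divides `ψ̂₁` and `ψ̂₂`, the reduced `ψ̂₁/g` is invertible modulo `Λ/g`,
and `Eₚ ≡ (ψ̂₂/g)·(ψ̂₁/g)⁻¹ (mod Λ/g)`. -/
theorem reduced_congruence_of_gcd {F : Type*} [Field F] [DecidableEq F] {m : ℕ}
    (α : Fin m → F) (hα : Function.Injective α)
    (e : Fin m → F) (he : ∀ j, e j ≠ 0) (lam ψ1 ψ2 g : F[X])
    (hg : g = EuclideanDomain.gcd lam (∏ j, (X - C (α j))))
    (hgdeg : 0 < g.natDegree) (hgprop : g.natDegree < m)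
    (h1 : (∏ j, (X - C (α j))) ∣
      lam * Lagrange.interpolate Finset.univ α e - ψ1)
    (h2 : (∏ j, (X - C (α j))) ∣
      lam * (Lagrange.interpolate Finset.univ α e) ^ 2 - ψ2) :
    g ∣ ψ1 ∧ g ∣ ψ2 ∧
      IsCoprime (ψ1 / g) ((∏ j, (X - C (α j))) / g) ∧
      ((∏ j, (X - C (α j))) / g) ∣
        (ψ1 / g) * Lagrange.interpolate Finset.univ α e - ψ2 / g :=
  reduced_congruence_of_gcd_general α hα e he lam ψ1 ψ2 g hg h1 h2
end
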